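/- Let G be a finite group, p a prime, and P a p-subgroup. The set P̃ = {x ∈ Ω_1 Z(P) : x ∈ E_1(G) or x = 1} is a subgroup of Z(P), and it is a characteristic subgroup of P (invariant under every automorphism of P induced by conjugation by an element of N_G(P)). -/

import Mathlib

/-- The center of a subgroup `P`, viewed as a subgroup of the ambient group `G`. -/
def ZS {G : Type*} [Group G] (P : Subgroup G) : Subgroup G :=
  Subgroup.centralizer (P : Set G) ⊓ P

/-- The smallest subset of `G` containing the elements of order `p` lying in the center of
some Sylow `p`-subgroup, closed under conjugation and under products of commuting elements. -/
inductive E1mem (p : ℕ) {G : Type*} [Group G] : G → Prop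
  | base (x : G) (h : orderOf x = p) (S : Sylow p G) (hx : x ∈ ZS (S : Subgroup G)) : E1mem p x
  | conj (g x : G) (h : E1mem p x) : E1mem p (g * x * g⁻¹)
  | mul (x y : G) (hx : E1mem p x) (hy : E1mem p y) (h : Commute x y) : E1mem p (x * y)

/-!
The elements of order `p` in `Z(P)` form an elementary abelian subgroup `Ω₁Z(P)`, and `E₁(G)` is
closed under commuting products, hence under positive powers and so under inverses of elements of
finite order. Thus `E₁(G) ∪ {1}` cuts out a subgroup of `Ω₁Z(P)`. Conjugation by `N_G(P)`
preserves `Z(P)`, the order of elements, and `E₁(G)`, so it preserves this subgroup.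
-/

section

variable {G : Type*} [Group G]

lemma E1mem.pow {p : ℕ} {x : G} (hx : E1mem p x) {n : ℕ} (hn : n ≠ 0) : E1mem p (x ^ n) := by
  induction n with
  | zero => exact absurd rfl hn
  | succ m ih =>
    rcases Nat.eq_zero_or_pos m with rfl | hm
    · simpa using hx
    · rw [pow_succ]
      exact E1mem.mul _ _ (ih hm.ne') hx ((Commute.refl x).pow_left m)

lemma E1mem.inv_of_pow_eq_one {p : ℕ} {x : G} (hx : E1mem p x) {n : ℕ} (hn : 0 < n)
    (hxn : x ^ n = 1) : E1mem p x⁻¹ := by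
  -- `2n - 1` rather than `n - 1`, so that the exponent stays positive when `n = 1`.
  have hinv : x ^ (2 * n - 1) = x⁻¹ := by
    refine eq_inv_of_mul_eq_one_left ?_
    rw [← pow_succ, Nat.sub_add_cancel (by omega), pow_mul', hxn, one_pow]
  exact hinv ▸ hx.pow (by omega)

lemma conj_mem_ZS_of_mem_normalizer {P : Subgroup G} {g x : G}
    (hg : g ∈ Subgroup.normalizer (P : Set G)) (hx : x ∈ ZS P) : g * x * g⁻¹ ∈ ZS P := by
  refine ⟨Subgroup.mem_centralizer_iff.mpr fun h hh => ?_,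
    (Subgroup.mem_normalizer_iff.mp hg x).mp hx.2⟩
  have hh' : g⁻¹ * h * g ∈ P := (Subgroup.mem_normalizer_iff''.mp hg h).mp hh
  have hcomm : g⁻¹ * h * g * x = x * (g⁻¹ * h * g) := hx.1 _ hh'
  calc h * (g * x * g⁻¹) = g * (g⁻¹ * h * g * x) * g⁻¹ := by group
    _ = g * (x * (g⁻¹ * h * g)) * g⁻¹ := by rw [hcomm]
    _ = g * x * g⁻¹ * h := by group

/-- `P̃ = {x ∈ Ω₁Z(P) | x ∈ E₁(G) ∨ x = 1}`. -/
def omegaOneCenterE1 (p : ℕ) [Fact p.Prime] (P : Subgroup G) : Subgroup G where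
  carrier := {x : G | x ∈ ZS P ∧ x ^ p = 1 ∧ (E1mem p x ∨ x = 1)}
  one_mem' := ⟨(ZS P).one_mem, one_pow p, Or.inr rfl⟩
  mul_mem' := by
    rintro x y ⟨hxZ, hxp, hxE⟩ ⟨hyZ, hyp, hyE⟩
    have hcomm : Commute x y := (hxZ.1 y hyZ.2).symm
    refine ⟨(ZS P).mul_mem hxZ hyZ, by rw [hcomm.mul_pow, hxp, hyp, one_mul], ?_⟩
    rcases hxE with hx | rfl
    · rcases hyE with hy | rfl
      · exact Or.inl (E1mem.mul x y hx hy hcomm)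
      · simpa using Or.inl hx
    · simpa using hyE
  inv_mem' := by
    rintro x ⟨hxZ, hxp, hxE⟩
    refine ⟨(ZS P).inv_mem hxZ, by rw [inv_pow, hxp, inv_one], ?_⟩
    rcases hxE with hx | rfl
    · exact Or.inl (hx.inv_of_pow_eq_one (Fact.out : p.Prime).pos hxp)
    · simp

lemma conj_mem_omegaOneCenterE1 {p : ℕ} [Fact p.Prime] {P : Subgroup G} {g x : G}
    (hg : g ∈ Subgroup.normalizer (P : Set G)) (hx : x ∈ omegaOneCenterE1 p P) :
    g * x * g⁻¹ ∈ omegaOneCenterE1 p P := by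
  obtain ⟨hxZ, hxp, hxE⟩ := hx
  refine ⟨conj_mem_ZS_of_mem_normalizer hg hxZ,
    by rw [conj_pow, hxp, mul_one, mul_inv_cancel], ?_⟩
  rcases hxE with hx | rfl
  · exact Or.inl (E1mem.conj g x hx)
  · simp

end

theorem stmt5_general {G : Type*} [Group G] {p : ℕ} [Fact p.Prime]
    (P : Subgroup G) :
    ∃ T : Subgroup G,
      ((T : Set G) = {x : G | x ∈ ZS P ∧ x ^ p = 1 ∧ (E1mem p x ∨ x = 1)}) ∧
      T ≤ ZS P ∧
      ∀ g ∈ Subgroup.normalizer (P : Set G), ∀ x ∈ T, g * x * g⁻¹ ∈ T :=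
  ⟨omegaOneCenterE1 p P, rfl, fun _ hx => hx.1,
    fun _ hg _ hx => conj_mem_omegaOneCenterE1 hg hx⟩

/-- The set `P̃ = {x ∈ Ω₁Z(P) : x ∈ E₁(G) or x = 1}` is a subgroup of `Z(P)`, and it is
invariant under conjugation by every element of `N_G(P)`. -/
theorem stmt5 {G : Type*} [Group G] [Fintype G] {p : ℕ} [Fact p.Prime]
    (P : Subgroup G) (hP : IsPGroup p ↥P) :
    ∃ T : Subgroup G,
      ((T : Set G) = {x : G | x ∈ ZS P ∧ x ^ p = 1 ∧ (E1mem p x ∨ x = 1)}) ∧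
      T ≤ ZS P ∧
      ∀ g ∈ Subgroup.normalizer (P : Set G), ∀ x ∈ T, g * x * g⁻¹ ∈ T :=
  stmt5_general P
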